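/- Let F be a Muller condition over a finite alphabet Σ. If L_F is recognised by a deterministic generalised Büchi automaton, then L_F is recognised by a deterministic generalised Büchi automaton with a single state; equivalently, there exist finitely many sets B₁,…,B_k ⊆ Σ such that L_F = {w ∈ Σ^ω : Inf(w) ∩ B_i ≠ ∅ for every i}. -/

import Mathlib

/-- The set of letters occurring infinitely often in the infinite word `w`. -/
def InfOcc {α : Type} (w : ℕ → α) : Set α :=
  {a | ∀ n, ∃ m, n ≤ m ∧ w m = a}

/-- A deterministic transition-based automaton over input alphabet `σ`
with output alphabet `Γ` and set of states `Q`. -/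
structure DetAut (σ Γ Q : Type) where
  init : Q
  δ : Q → σ → Q × Γ

namespace DetAut

variable {σ Γ Q : Type}

/-- The sequence of states of the run of `A` over `w`. -/
def run (A : DetAut σ Γ Q) (w : ℕ → σ) : ℕ → Q
  | 0 => A.init
  | n + 1 => (A.δ (run A w n) (w n)).1

/-- The output word produced by `A` reading `w`. -/
def output (A : DetAut σ Γ Q) (w : ℕ → σ) (n : ℕ) : Γ :=
  (A.δ (A.run w n) (w n)).2

end DetAut

/-- `u` satisfies the Rabin condition given by the pairs in `R`. -/
def RabinAccept {Γ : Type} (R : List (Set Γ × Set Γ)) (u : ℕ → Γ) : Prop :=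
  ∃ p ∈ R, (InfOcc u ∩ p.1).Nonempty ∧ InfOcc u ∩ p.2 = ∅

/-- `u` satisfies the Streett condition given by the pairs in `R`. -/
def StreettAccept {Γ : Type} (R : List (Set Γ × Set Γ)) (u : ℕ → Γ) : Prop :=
  ∀ p ∈ R, (InfOcc u ∩ p.1).Nonempty → (InfOcc u ∩ p.2).Nonempty

/-- The language accepted by the automaton `A` with Rabin condition `R`. -/
def RabinLang {σ Γ Q : Type} (A : DetAut σ Γ Q) (R : List (Set Γ × Set Γ)) :
    Set (ℕ → σ) :=
  {w | RabinAccept R (A.output w)}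

/-- The Muller language associated to the Muller condition `F`. -/
def LF {Γ : Type} (F : Set (Set Γ)) : Set (ℕ → Γ) :=
  {w | InfOcc w ∈ F}

/-- `u` satisfies the generalised Büchi condition given by the sets in `B`. -/
def GenBuchiAccept {Γ : Type} (B : List (Set Γ)) (u : ℕ → Γ) : Prop :=
  ∀ b ∈ B, (InfOcc u ∩ b).Nonempty


/-!
If `L_F` is recognised by a deterministic generalised Büchi automaton `A` with finitely many
states, then `F` is upward closed on nonempty sets: given `S ∈ F` and `S ⊆ T`, fix a periodic
word `v` with `Inf(v) = S`. From every reachable state, reading `v` visits every Büchi set, and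
finiteness of the state space bounds the time needed by a single `N`. The periodic word whose
period is `v` on `[0, N)` followed by an enumeration of `T` then visits every Büchi set in every
period, so it is accepted, and its set of recurrent letters is `T`.
An upward closed `F` is described by the Büchi sets `Cᶜ` for `C ∉ F`.
-/

open Filter Function Set

theorem mem_infOcc_iff_frequently {α : Type} {w : ℕ → α} {a : α} :
    a ∈ InfOcc w ↔ ∃ᶠ n in atTop, w n = a :=
  frequently_atTop.symm

theorem infOcc_subset_range {α : Type} (w : ℕ → α) : InfOcc w ⊆ range w := fun _ ha =>
  let ⟨m, _, hm⟩ := ha 0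
  ⟨m, hm⟩

theorem infOcc_comp_add_left {α : Type} (w : ℕ → α) (n : ℕ) :
    InfOcc (fun k => w (n + k)) = InfOcc w := by
  ext a
  simp only [mem_infOcc_iff_frequently, add_comm n]
  conv_rhs => rw [← map_add_atTop_eq_nat n]
  rw [frequently_map]

theorem inter_infOcc_nonempty_of_frequently {α : Type} {w : ℕ → α} {b : Set α}
    (hw : (range w).Finite) (h : ∃ᶠ n in atTop, w n ∈ b) : (InfOcc w ∩ b).Nonempty := by
  by_contra hempty
  have hrare : ∀ a ∈ range w ∩ b, ∀ᶠ n in atTop, w n ≠ a := fun a ha =>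
    not_frequently.1 fun hfreq => hempty ⟨a, mem_infOcc_iff_frequently.2 hfreq, ha.2⟩
  refine h ((hw.inter_of_left b).eventually_all.2 hrare |>.mono fun n hn hwn => ?_)
  exact hn (w n) ⟨mem_range_self n, hwn⟩ rfl

theorem infOcc_nonempty {α : Type} [Finite α] (w : ℕ → α) : (InfOcc w).Nonempty := by
  simpa using inter_infOcc_nonempty_of_frequently (b := univ) (toFinite (range w))
    (Frequently.of_forall fun _ => mem_univ _)

theorem Function.Periodic.infOcc_eq_range {α : Type} {w : ℕ → α} {p : ℕ} (hw : Periodic w p)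
    (hp : 0 < p) : InfOcc w = range w := by
  refine (infOcc_subset_range w).antisymm ?_
  rintro _ ⟨j, rfl⟩ n
  exact ⟨j + n * p, by nlinarith, hw.nat_mul n j⟩

theorem Set.Finite.exists_periodic_range_eq {α : Type} {S : Set α} (hS : S.Finite)
    (hne : S.Nonempty) : ∃ (v : ℕ → α) (p : ℕ), 0 < p ∧ Periodic v p ∧ range v = S := by
  obtain ⟨p, f, -, rfl⟩ := hS.fin_param
  have hp : 0 < p := by
    obtain ⟨_, i, -⟩ := hne
    exact i.pos
  refine ⟨fun k => f ⟨k % p, Nat.mod_lt k hp⟩, p, hp, fun k => by simp, ?_⟩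
  refine (range_subset_iff.2 fun k => mem_range_self _).antisymm ?_
  rintro _ ⟨i, rfl⟩
  exact ⟨i, by simp [Nat.mod_eq_of_lt i.isLt]⟩

theorem Set.Finite.exists_periodic_range_eq_with_prefix {α : Type} {T : Set α} (hT : T.Finite)
    {v : ℕ → α} (hvT : range v ⊆ T) (hne : T.Nonempty) (N : ℕ) :
    ∃ (w : ℕ → α) (L : ℕ), 0 < L ∧ Periodic w L ∧ range w = T ∧ ∀ m < N, w m = v m := by
  obtain ⟨u, r, hr, hu, huT⟩ := hT.exists_periodic_range_eq hne
  set L := N + r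
  set w : ℕ → α := fun n => if n % L < N then v (n % L) else u (n % L - N)
  refine ⟨w, L, by omega, fun n => by simp [w], ?_, fun m hm => ?_⟩
  · refine (range_subset_iff.2 fun n => ?_).antisymm ?_
    · by_cases h : n % L < N
      · simpa [w, h] using hvT (mem_range_self (n % L))
      · simpa [w, h] using huT ▸ mem_range_self (n % L - N)
    · rintro a ha
      obtain ⟨j, rfl⟩ := huT ▸ ha
      refine ⟨N + j % r, ?_⟩
      have hj : j % r < r := Nat.mod_lt j hr
      simp [w, Nat.mod_eq_of_lt (show N + j % r < L by omega), hu.map_mod_nat]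
  · simp [w, Nat.mod_eq_of_lt (show m < L by omega), hm]

namespace DetAut

variable {σ Γ Q : Type}

def withInit (A : DetAut σ Γ Q) (q : Q) : DetAut σ Γ Q := { A with init := q }

def identity (σ : Type) : DetAut σ σ PUnit := ⟨PUnit.unit, fun _ a => (PUnit.unit, a)⟩

@[simp]
theorem output_identity (w : ℕ → σ) : (identity σ).output w = w := rfl

theorem run_congr (A : DetAut σ Γ Q) {u v : ℕ → σ} {n : ℕ} (h : ∀ m < n, u m = v m) :
    A.run u n = A.run v n := by
  induction n with
  | zero => rfl
  | succ n ih =>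
    show (A.δ (A.run u n) (u n)).1 = (A.δ (A.run v n) (v n)).1
    rw [ih fun m hm => h m (by omega), h n n.lt_succ_self]

theorem output_congr (A : DetAut σ Γ Q) {u v : ℕ → σ} {k : ℕ} (h : ∀ m ≤ k, u m = v m) :
    A.output u k = A.output v k := by
  simp only [output, A.run_congr fun m hm => h m hm.le, h k le_rfl]

theorem run_add (A : DetAut σ Γ Q) (w : ℕ → σ) (n k : ℕ) :
    A.run w (n + k) = (A.withInit (A.run w n)).run (fun i => w (n + i)) k := by
  induction k with
  | zero => rfl
  | succ k ih =>
    show (A.δ (A.run w (n + k)) (w (n + k))).1 = _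
    rw [ih]
    rfl

theorem output_add (A : DetAut σ Γ Q) (w : ℕ → σ) (n k : ℕ) :
    A.output w (n + k) = (A.withInit (A.run w n)).output (fun i => w (n + i)) k := by
  simp only [output, run_add]
  rfl

theorem finite_range_output [Finite σ] [Finite Q] (A : DetAut σ Γ Q) (w : ℕ → σ) :
    (range (A.output w)).Finite :=
  (finite_range fun p : Q × σ => (A.δ p.1 p.2).2).subset <| by
    rintro _ ⟨m, rfl⟩
    exact ⟨(A.run w m, w m), rfl⟩

def Reachable (A : DetAut σ Γ Q) (q : Q) : Prop := ∃ (x : ℕ → σ) (n : ℕ), A.run x n = q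

end DetAut

section MullerGenBuchi

variable {σ Γ Q : Type} {F : Set (Set σ)} {A : DetAut σ Γ Q} {B : List (Set Γ)}

theorem genBuchiAccept_withInit_iff (hA : {w | GenBuchiAccept B (A.output w)} = LF F)
    {q : Q} (hq : A.Reachable q) (v : ℕ → σ) :
    GenBuchiAccept B ((A.withInit q).output v) ↔ InfOcc v ∈ F := by
  obtain ⟨x, n, rfl⟩ := hq
  set y : ℕ → σ := fun m => if m < n then x m else v (m - n)
  have hy : (fun k => y (n + k)) = v := funext fun k => by simp [y]
  have hrun : A.run y n = A.run x n := A.run_congr fun m hm => if_pos hm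
  have hout : (A.withInit (A.run x n)).output v = fun k => A.output y (n + k) := by
    simp only [DetAut.output_add, hrun, hy]
  have hinf : InfOcc v = InfOcc y := by rw [← hy, infOcc_comp_add_left]
  simp only [GenBuchiAccept, hout, infOcc_comp_add_left, hinf]
  exact Set.ext_iff.1 hA y

theorem exists_bound_genBuchi_visits [Finite Q] (hA : {w | GenBuchiAccept B (A.output w)} = LF F)
    {v : ℕ → σ} (hv : InfOcc v ∈ F) :
    ∃ N, ∀ q, A.Reachable q → ∀ b ∈ B, ∃ k < N, (A.withInit q).output v k ∈ b := by
  have hbound : ∀ q, ∀ᶠ N in atTop,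
      A.Reachable q → ∀ b ∈ B, ∃ k < N, (A.withInit q).output v k ∈ b := by
    intro q
    by_cases hq : A.Reachable q
    · have hvisit : ∀ b ∈ B, ∀ᶠ N in atTop, ∃ k < N, (A.withInit q).output v k ∈ b := by
        intro b hb
        obtain ⟨c, hc, hcb⟩ := (genBuchiAccept_withInit_iff hA hq v).2 hv b hb
        obtain ⟨k, hk⟩ := infOcc_subset_range _ hc
        exact (eventually_gt_atTop k).mono fun N hN => ⟨k, hN, hk ▸ hcb⟩
      exact ((List.finite_toSet B).eventually_all.2 hvisit).mono fun _ h _ => h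
    · exact Eventually.of_forall fun _ h => absurd h hq
  exact (eventually_all.2 hbound).exists

theorem mem_of_subset_of_genBuchi_eq_LF [Finite σ] [Finite Q]
    (hA : {w | GenBuchiAccept B (A.output w)} = LF F) {S T : Set σ} (hS : S.Nonempty)
    (hSF : S ∈ F) (hST : S ⊆ T) : T ∈ F := by
  obtain ⟨v, p, hp, hv, hvS⟩ := (toFinite S).exists_periodic_range_eq hS
  obtain ⟨N, hN⟩ := exists_bound_genBuchi_visits hA (v := v) (by rwa [hv.infOcc_eq_range hp, hvS])
  obtain ⟨w, L, hL, hw, hwT, hwv⟩ :=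
    (toFinite T).exists_periodic_range_eq_with_prefix (hvS ▸ hST) (hS.mono hST) N
  have hvisit : ∀ b ∈ B, ∀ i, ∃ k < N, A.output w (i * L + k) ∈ b := by
    intro b hb i
    obtain ⟨k, hk, hkb⟩ := hN _ ⟨w, i * L, rfl⟩ b hb
    refine ⟨k, hk, ?_⟩
    have hshift : (fun j => w (i * L + j)) = w := funext fun j => by
      rw [add_comm]
      exact hw.nat_mul i j
    rw [DetAut.output_add, hshift, DetAut.output_congr _ fun m hm => hwv m (by omega)]
    exact hkb
  have hacc : GenBuchiAccept B (A.output w) := by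
    intro b hb
    refine inter_infOcc_nonempty_of_frequently (A.finite_range_output w) ?_
    refine frequently_atTop.2 fun i => ?_
    obtain ⟨k, -, hk⟩ := hvisit b hb i
    exact ⟨i * L + k, (Nat.le_mul_of_pos_right i hL).trans (Nat.le_add_right _ _), hk⟩
  have hwF : InfOcc w ∈ F := (hA ▸ hacc : w ∈ LF F)
  rwa [hw.infOcc_eq_range hL, hwT] at hwF

theorem exists_genBuchi_eq_LF_of_upward_closed [Finite σ]
    (hF : ∀ S T : Set σ, S.Nonempty → S ∈ F → S ⊆ T → T ∈ F) :
    ∃ B : List (Set σ), LF F = {w | ∀ b ∈ B, (InfOcc w ∩ b).Nonempty} := by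
  have hfin : (compl '' {C : Set σ | C ∉ F}).Finite := toFinite _
  refine ⟨hfin.toFinset.toList, ext fun w => ?_⟩
  simp only [LF, mem_ofPred_eq, Finset.mem_toList, Finite.mem_toFinset, forall_mem_image]
  constructor
  · intro hw C hC
    by_contra hempty
    exact hC (hF _ C (infOcc_nonempty w) hw fun a ha => by_contra fun haC => hempty ⟨a, ha, haC⟩)
  · intro hw
    by_contra hwF
    obtain ⟨a, ha, hac⟩ := hw hwF
    exact hac ha

end MullerGenBuchi

/-- If the Muller language `L_F` is recognised by a deterministic generalised
Büchi automaton, then it is recognised by one with a single state;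
equivalently, `L_F = {w | Inf(w) ∩ Bᵢ ≠ ∅ for every i}` for finitely many sets
`B₁, …, B_k ⊆ σ`. -/
theorem stmt10 {σ : Type} [Fintype σ] (F : Set (Set σ))
    (h : ∃ (Q : Type) (_ : Fintype Q) (Γ : Type) (A : DetAut σ Γ Q)
        (B : List (Set Γ)), {w | GenBuchiAccept B (A.output w)} = LF F) :
    (∃ (Γ : Type) (A : DetAut σ Γ PUnit) (B : List (Set Γ)),
        {w | GenBuchiAccept B (A.output w)} = LF F) ∧
    (∃ B : List (Set σ),
        LF F = {w : ℕ → σ | ∀ b ∈ B, (InfOcc w ∩ b).Nonempty}) := by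
  obtain ⟨Q, _, Γ, A, B, hA⟩ := h
  obtain ⟨B₀, hB₀⟩ := exists_genBuchi_eq_LF_of_upward_closed fun S T hS hSF hST =>
    mem_of_subset_of_genBuchi_eq_LF hA hS hSF hST
  exact ⟨⟨σ, DetAut.identity σ, B₀, by simp [hB₀, GenBuchiAccept]⟩, B₀, hB₀⟩
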